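/- Composing a dimensionality reduction map with a random invertible matrix preserves recoverability of the collaboration representation: if f'(X) = f(X) E with E ∈ ℝ^{m̃×m̃} invertible and f linear, and G' = (f'(X^anc))† U with f'(X^anc) of full column rank, then f'(X) G' = f(X) (f(X^anc))† U for every X whose rows lie in the row space such that f(X^anc) has full column rank. In particular, the final collaboration representation is independent of E. -/

import Mathlib

open Matrix

/-- Moore–Penrose pseudoinverse of a full-column-rank real matrix:
`A† = (AᵀA)⁻¹ Aᵀ`. -/
noncomputable def pinv {r mt : ℕ} (A : Matrix (Fin r) (Fin mt) ℝ) :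
    Matrix (Fin mt) (Fin r) ℝ :=
  (A.transpose * A)⁻¹ * A.transpose

theorem pinv_mul_right {r mt : ℕ} (A : Matrix (Fin r) (Fin mt) ℝ)
    {E : Matrix (Fin mt) (Fin mt) ℝ} (hE : IsUnit E.det) :
    pinv (A * E) = E⁻¹ * pinv A := by
  have hEt : IsUnit Eᵀ.det := by rwa [det_transpose]
  calc pinv (A * E) = (Eᵀ * (Aᵀ * A * E))⁻¹ * (Eᵀ * Aᵀ) := by
        simp only [pinv, transpose_mul, Matrix.mul_assoc]
    _ = E⁻¹ * (Aᵀ * A)⁻¹ * (Eᵀ⁻¹ * Eᵀ) * Aᵀ := by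
        rw [Matrix.mul_inv_rev, Matrix.mul_inv_rev]
        simp only [Matrix.mul_assoc]
    _ = E⁻¹ * pinv A := by
        rw [nonsing_inv_mul _ hEt, Matrix.mul_one, pinv, Matrix.mul_assoc]

theorem collaboration_independent_of_E_general {n r m mt mh : ℕ}
    (F : Matrix (Fin m) (Fin mt) ℝ)
    (E : Matrix (Fin mt) (Fin mt) ℝ) (hE : IsUnit E.det)
    (Xanc : Matrix (Fin r) (Fin m) ℝ)
    (U : Matrix (Fin r) (Fin mh) ℝ) :
    ∀ X : Matrix (Fin n) (Fin m) ℝ,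
      (X * F * E) * (pinv (Xanc * F * E) * U) = (X * F) * (pinv (Xanc * F) * U) := by
  intro X
  calc (X * F * E) * (pinv (Xanc * F * E) * U)
      = X * F * E * E⁻¹ * (pinv (Xanc * F) * U) := by
        rw [pinv_mul_right _ hE, Matrix.mul_assoc E⁻¹, ← Matrix.mul_assoc (X * F * E)]
    _ = (X * F) * (pinv (Xanc * F) * U) := by
        rw [mul_nonsing_inv_cancel_right _ _ hE]

/-- Composing the dimensionality reduction `f(X) = X F` with an
invertible random matrix `E` (so `f'(X) = X F E`) preserves the collaboration
representation: with `G' = (f'(X^anc))† U` and `f(X^anc)` of full column rank,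
`f'(X) G' = f(X) (f(X^anc))† U` for every `X`; the result is independent of `E`. -/
theorem collaboration_independent_of_E {n r m mt mh : ℕ}
    (F : Matrix (Fin m) (Fin mt) ℝ)
    (E : Matrix (Fin mt) (Fin mt) ℝ) (hE : IsUnit E.det)
    (Xanc : Matrix (Fin r) (Fin m) ℝ)
    (hfull : IsUnit ((Xanc * F).transpose * (Xanc * F)).det)
    (U : Matrix (Fin r) (Fin mh) ℝ) :
    ∀ X : Matrix (Fin n) (Fin m) ℝ,
      (X * F * E) * (pinv (Xanc * F * E) * U) = (X * F) * (pinv (Xanc * F) * U) :=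
  collaboration_independent_of_E_general F E hE Xanc U
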